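/- An atomic L∘-term σ (a conjunction of literals of the form p, ¬p, ∘p, •p, where •p abbreviates ¬∘p) is BD-unsatisfiable if and only if (i) there is a variable p such that p, ¬p, and ∘p all occur as conjuncts of σ, or (ii) there is a variable p such that ∘p and •p both occur as conjuncts of σ. -/
import Mathlib


inductive FV | T | B | N | F
deriving DecidableEq

open FV

def fneg : FV → FV
  | T => F | F => T | B => B | N => N

def fand : FV → FV → FV
  | T, x => x
  | x, T => x
  | F, _ => F
  | _, F => F
  | B, B => B
  | N, N => N
  | B, N => F
  | N, B => F

def forr : FV → FV → FV
  | F, x => x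
  | x, F => x
  | T, _ => T
  | _, T => T
  | B, B => B
  | N, N => N
  | B, N => T
  | N, B => T

def fcirc : FV → FV
  | T => T | F => T | B => F | N => F

def ftri : FV → FV
  | T => T | B => T | N => F | F => F

inductive Fm
  | var : ℕ → Fm
  | neg : Fm → Fm
  | conj : Fm → Fm → Fm
  | disj : Fm → Fm → Fm
  | circ : Fm → Fm
  | tri : Fm → Fm

def eval (v : ℕ → FV) : Fm → FV
  | .var p => v p
  | .neg φ => fneg (eval v φ)
  | .conj φ χ => fand (eval v φ) (eval v χ)
  | .disj φ χ => forr (eval v φ) (eval v χ)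
  | .circ φ => fcirc (eval v φ)
  | .tri φ => ftri (eval v φ)

/-- designated values -/
def desig (x : FV) : Prop := x = T ∨ x = B

/-- formulas over {¬,∧,∨} -/
def isBD : Fm → Prop
  | .var _ => True
  | .neg φ => isBD φ
  | .conj φ χ => isBD φ ∧ isBD χ
  | .disj φ χ => isBD φ ∧ isBD χ
  | .circ _ => False
  | .tri _ => False

/-- formulas over {¬,∧,∨,∘} -/
def isCircFm : Fm → Prop
  | .var _ => True
  | .neg φ => isCircFm φ
  | .conj φ χ => isCircFm φ ∧ isCircFm χ
  | .disj φ χ => isCircFm φ ∧ isCircFm χ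
  | .circ φ => isCircFm φ
  | .tri _ => False

/-- formulas over {¬,∧,∨,△} -/
def isTriFm : Fm → Prop
  | .var _ => True
  | .neg φ => isTriFm φ
  | .conj φ χ => isTriFm φ ∧ isTriFm χ
  | .disj φ χ => isTriFm φ ∧ isTriFm χ
  | .circ _ => False
  | .tri φ => isTriFm φ

/-- BD entailment between single formulas -/
def ent (φ χ : Fm) : Prop := ∀ v, desig (eval v φ) → desig (eval v χ)

/-- classical (two-valued) evaluation of {¬,∧,∨}-formulas -/
def evalC (b : ℕ → Bool) : Fm → Bool
  | .var p => b p
  | .neg φ => !(evalC b φ)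
  | .conj φ χ => evalC b φ && evalC b χ
  | .disj φ χ => evalC b φ || evalC b χ
  | .circ φ => evalC b φ
  | .tri φ => evalC b φ


/-- atomic L∘-literals: p, ¬p, ∘p, •p -/
inductive CLit
  | pos : ℕ → CLit
  | negl : ℕ → CLit
  | circ : ℕ → CLit
  | bullet : ℕ → CLit
deriving DecidableEq

def clitEval (v : ℕ → FV) : CLit → FV
  | .pos p => v p
  | .negl p => fneg (v p)
  | .circ p => fcirc (v p)
  | .bullet p => fneg (fcirc (v p))

theorem atomic_circ_term_unsat_iff (σ : List CLit) :
    (¬ ∃ v : ℕ → FV, ∀ l ∈ σ, desig (clitEval v l)) ↔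
    ((∃ p, CLit.pos p ∈ σ ∧ CLit.negl p ∈ σ ∧ CLit.circ p ∈ σ) ∨
     (∃ p, CLit.circ p ∈ σ ∧ CLit.bullet p ∈ σ)) := by
  classical
  constructor
  · intro h
    by_contra hc
    push_neg at hc
    obtain ⟨h1, h2⟩ := hc
    apply h
    refine ⟨fun p => if CLit.bullet p ∈ σ then B
      else if CLit.negl p ∈ σ ∧ CLit.pos p ∈ σ then B
      else if CLit.negl p ∈ σ then F else T, ?_⟩
    intro l hl
    cases l with
    | pos p =>
      simp only [clitEval]
      split_ifs <;> simp_all [desig]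
    | negl p =>
      simp only [clitEval]
      split_ifs <;> simp_all [desig, fneg]
    | circ p =>
      simp only [clitEval]
      split_ifs with hb hnb <;> simp_all [desig, fcirc]
    | bullet p =>
      simp only [clitEval]
      split_ifs <;> simp_all [desig, fneg, fcirc]
  · rintro (⟨p, hp, hn, hc⟩ | ⟨p, hc, hb⟩) ⟨v, hv⟩
    · have h1 := hv _ hp
      have h2 := hv _ hn
      have h3 := hv _ hc
      cases hvp : v p <;>
        simp [clitEval, hvp, fneg, fcirc, desig] at h1 h2 h3
    · have h1 := hv _ hc
      have h2 := hv _ hb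
      cases hvp : v p <;>
        simp [clitEval, hvp, fneg, fcirc, desig] at h1 h2
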